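/- arXiv:2006.00704 — 5 statements merged into one kernel-verified Lean document; each statement's English description precedes it below -/
import Mathlib

section
/- For every integer r ≥ 1, the tuple (x₁, x₂, y₁, y₂, y₃) = (0, 0, t, -t, t) for any nonzero t ∈ ℝ is a non-trivial solution to the symmetric system of polynomial equations (the asymmetric system with π = 1/2, c = 1) which violates the inequality |x₁|^r + |y₁|^{r/2} + |y₂|^{r/2} ≤ |2x₂-x₁|^r + |y₃-y₁|^{r/2} + |y₂+y₃|^{r/2}. -/
open Finset

/-- Index set of the first sum of the symmetric system: quadruples `(α₁, α₂, β₁, β₂)` with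
`α₁ + β₁ + 2α₂ + 2β₂ = ℓ`, `1 ≤ α₁ + α₂ ≤ r`, and `β₁ + β₂ ≤ r - (α₁ + α₂)`. -/
def symIdx1 (r ℓ : ℕ) : Finset (ℕ × ℕ × ℕ × ℕ) :=
  ((Finset.range (ℓ + 1)) ×ˢ (Finset.range (ℓ + 1)) ×ˢ (Finset.range (ℓ + 1)) ×ˢ
      (Finset.range (ℓ + 1))).filter
    (fun q => q.1 + q.2.2.1 + 2 * q.2.1 + 2 * q.2.2.2 = ℓ ∧ 1 ≤ q.1 + q.2.1 ∧
      q.1 + q.2.1 ≤ r ∧ q.2.2.1 + q.2.2.2 ≤ r - (q.1 + q.2.1))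

/-- Index set of the second sum: pairs `(α₁, α₂)` with `α₁ + 2α₂ = ℓ`, `1 ≤ α₁ + α₂ ≤ r`. -/
def symIdx2 (r ℓ : ℕ) : Finset (ℕ × ℕ) :=
  ((Finset.range (ℓ + 1)) ×ˢ (Finset.range (ℓ + 1))).filter
    (fun p => p.1 + 2 * p.2 = ℓ ∧ 1 ≤ p.1 + p.2 ∧ p.1 + p.2 ≤ r)

/-- Left-hand side of the `ℓ`-th equation of the symmetric system of order `r`. -/
noncomputable def symLHS (r ℓ : ℕ) (x₁ x₂ y₁ y₂ y₃ : ℝ) : ℝ :=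
  (∑ q ∈ symIdx1 r ℓ,
      2 ^ q.2.2.1 * (-x₁) ^ q.1 * x₂ ^ q.2.2.1 * y₂ ^ q.2.1 * y₃ ^ q.2.2.2 /
        (2 ^ (q.2.1 + q.2.2.2) * (Nat.factorial q.1 : ℝ) * (Nat.factorial q.2.1 : ℝ) *
          (Nat.factorial q.2.2.1 : ℝ) * (Nat.factorial q.2.2.2 : ℝ)))
    + ∑ p ∈ symIdx2 r ℓ,
        x₁ ^ p.1 * y₁ ^ p.2 / (2 ^ p.2 * (Nat.factorial p.1 : ℝ) * (Nat.factorial p.2 : ℝ))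

/-- `(x₁, x₂, y₁, y₂, y₃)` solves the equalities of the symmetric system of order `r`. -/
def symSolEq (r : ℕ) (x₁ x₂ y₁ y₂ y₃ : ℝ) : Prop :=
  ∀ ℓ ∈ Finset.Icc 1 r, symLHS r ℓ x₁ x₂ y₁ y₂ y₃ = 0

/-- The polynomial inequality of the symmetric system of order `r`:
`|x₁|^r + |y₁|^{r/2} + |y₂|^{r/2} ≤ |2x₂-x₁|^r + |y₃-y₁|^{r/2} + |y₂+y₃|^{r/2}`. -/
noncomputable def symIneq (r : ℕ) (x₁ x₂ y₁ y₂ y₃ : ℝ) : Prop :=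
  |x₁| ^ (r : ℝ) + |y₁| ^ ((r : ℝ) / 2) + |y₂| ^ ((r : ℝ) / 2) ≤
    |2 * x₂ - x₁| ^ (r : ℝ) + |y₃ - y₁| ^ ((r : ℝ) / 2) + |y₂ + y₃| ^ ((r : ℝ) / 2)

/-- A solution is non-trivial if at least one of `x₁, y₁, y₂` is nonzero. -/
def nontrivSol (x₁ y₁ y₂ : ℝ) : Prop := x₁ ≠ 0 ∨ y₁ ≠ 0 ∨ y₂ ≠ 0

/-- The symmetric order `r̄_sym`: the smallest `r ≥ 1` such that the symmetric system
(equalities together with the inequality) of order `r` has no non-trivial real solution. -/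
noncomputable def symOrder : ℕ :=
  sInf {r : ℕ | 1 ≤ r ∧ ¬ ∃ x₁ x₂ y₁ y₂ y₃ : ℝ,
    nontrivSol x₁ y₁ y₂ ∧ symSolEq r x₁ x₂ y₁ y₂ y₃ ∧ symIneq r x₁ x₂ y₁ y₂ y₃}

/-! At `x₁ = x₂ = 0` only the pure `y`-monomials survive. The odd-indexed equations then vanish
identically, and by the binomial theorem the `2m`-th one becomes
`((y₂ + y₃)^m - y₃^m + y₁^m) / (2^m m!)`, which is zero at `(y₁, y₂, y₃) = (t, -t, t)`.
The inequality, on the other hand, reduces there to `2|t|^{r/2} ≤ 0`. -/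

open Nat

theorem add_pow_div_factorial {K : Type*} [Field K] [CharZero K] (a b : K) (n : ℕ) :
    (a + b) ^ n / n ! = ∑ p ∈ antidiagonal n, a ^ p.1 / p.1 ! * (b ^ p.2 / p.2 !) := by
  rw [(Commute.all a b).add_pow', sum_div]
  refine sum_congr rfl fun p hp => ?_
  rw [← HasAntidiagonal.mem_antidiagonal.mp hp, nsmul_eq_mul, Nat.cast_add_choose]
  have : ((p.1 + p.2)! : K) ≠ 0 := Nat.cast_ne_zero.mpr (factorial_ne_zero _)
  field_simp

noncomputable def symTerm1 (x₁ x₂ y₂ y₃ : ℝ) (q : ℕ × ℕ × ℕ × ℕ) : ℝ :=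
  2 ^ q.2.2.1 * (-x₁) ^ q.1 * x₂ ^ q.2.2.1 * y₂ ^ q.2.1 * y₃ ^ q.2.2.2 /
    (2 ^ (q.2.1 + q.2.2.2) * (q.1 ! : ℝ) * (q.2.1 ! : ℝ) * (q.2.2.1 ! : ℝ) * (q.2.2.2 ! : ℝ))

noncomputable def symTerm2 (x₁ y₁ : ℝ) (p : ℕ × ℕ) : ℝ :=
  x₁ ^ p.1 * y₁ ^ p.2 / (2 ^ p.2 * (p.1 ! : ℝ) * (p.2 ! : ℝ))

theorem symLHS_eq_sum_symTerm (r ℓ : ℕ) (x₁ x₂ y₁ y₂ y₃ : ℝ) :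
    symLHS r ℓ x₁ x₂ y₁ y₂ y₃ =
      ∑ q ∈ symIdx1 r ℓ, symTerm1 x₁ x₂ y₂ y₃ q + ∑ p ∈ symIdx2 r ℓ, symTerm2 x₁ y₁ p :=
  rfl

section

variable {y₁ y₂ y₃ : ℝ}

theorem symTerm1_zero_zero_of_ne {q : ℕ × ℕ × ℕ × ℕ} (hq : q.1 ≠ 0 ∨ q.2.2.1 ≠ 0) :
    symTerm1 0 0 y₂ y₃ q = 0 := by
  rcases hq with hq | hq <;> simp [symTerm1, zero_pow hq]

theorem symTerm1_zero_zero_mk (i j : ℕ) :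
    symTerm1 0 0 y₂ y₃ (0, i, 0, j) = y₂ ^ i / i ! * (y₃ ^ j / j !) / 2 ^ (i + j) := by
  simp only [symTerm1]
  field_simp
  ring

theorem symTerm2_zero_of_ne {p : ℕ × ℕ} (hp : p.1 ≠ 0) : symTerm2 0 y₁ p = 0 := by
  simp [symTerm2, zero_pow hp]

theorem symLHS_zero_zero_odd (r k : ℕ) : symLHS r (2 * k + 1) 0 0 y₁ y₂ y₃ = 0 := by
  rw [symLHS_eq_sum_symTerm]
  have h₁ : ∀ q ∈ symIdx1 r (2 * k + 1), symTerm1 0 0 y₂ y₃ q = 0 := fun q hq =>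
    symTerm1_zero_zero_of_ne (by simp only [symIdx1, mem_filter] at hq; omega)
  have h₂ : ∀ p ∈ symIdx2 r (2 * k + 1), symTerm2 0 y₁ p = 0 := fun p hp =>
    symTerm2_zero_of_ne (by simp only [symIdx2, mem_filter] at hp; omega)
  rw [sum_eq_zero h₁, sum_eq_zero h₂, add_zero]

theorem sum_symTerm1_zero_zero_even {r n : ℕ} (hn : n + 1 ≤ r) :
    ∑ q ∈ symIdx1 r (2 * (n + 1)), symTerm1 0 0 y₂ y₃ q =
      (∑ p ∈ antidiagonal n, y₂ ^ (p.1 + 1) / (p.1 + 1)! * (y₃ ^ p.2 / p.2 !)) / 2 ^ (n + 1) := by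
  have hsub : (antidiagonal n).image (fun p => (0, p.1 + 1, 0, p.2)) ⊆ symIdx1 r (2 * (n + 1)) := by
    intro q hq
    obtain ⟨p, hp, rfl⟩ := mem_image.mp hq
    rw [HasAntidiagonal.mem_antidiagonal] at hp
    simp only [symIdx1, mem_filter, mem_product, mem_range]
    omega
  have hzero : ∀ q ∈ symIdx1 r (2 * (n + 1)),
      q ∉ (antidiagonal n).image (fun p => (0, p.1 + 1, 0, p.2)) →
      symTerm1 0 0 y₂ y₃ q = 0 := by
    rintro ⟨a, i, b, j⟩ hq hqe
    refine symTerm1_zero_zero_of_ne ?_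
    by_contra! hab
    obtain ⟨rfl, rfl⟩ : a = 0 ∧ b = 0 := hab
    simp only [symIdx1, mem_filter] at hq
    obtain ⟨-, hq⟩ := hq
    refine hqe (mem_image.mpr ⟨(i - 1, j), ?_, ?_⟩)
    · simp only [HasAntidiagonal.mem_antidiagonal]
      omega
    · simp only [Prod.mk.injEq, true_and, and_true]
      omega
  rw [← sum_subset hsub hzero, sum_image (by simp [Set.InjOn, Prod.ext_iff]), sum_div]
  refine sum_congr rfl fun p hp => ?_
  rw [symTerm1_zero_zero_mk, ← HasAntidiagonal.mem_antidiagonal.mp hp, add_right_comm]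

theorem sum_symTerm2_zero_even {r m : ℕ} (hm : 1 ≤ m) (hmr : m ≤ r) :
    ∑ p ∈ symIdx2 r (2 * m), symTerm2 0 y₁ p = y₁ ^ m / m ! / 2 ^ m := by
  rw [sum_eq_single_of_mem (0, m)]
  · simp only [symTerm2]
    field_simp
    simp
  · simp only [symIdx2, mem_filter, mem_product, mem_range]
    omega
  · rintro ⟨a, b⟩ hp hne
    simp only [symIdx2, mem_filter] at hp
    exact symTerm2_zero_of_ne fun ha => hne (by simp only [Prod.mk.injEq]; omega)

theorem symLHS_zero_zero_even {r m : ℕ} (hm : 1 ≤ m) (hmr : m ≤ r) :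
    symLHS r (2 * m) 0 0 y₁ y₂ y₃ = ((y₂ + y₃) ^ m - y₃ ^ m + y₁ ^ m) / (2 ^ m * m !) := by
  obtain ⟨n, rfl⟩ := Nat.exists_eq_add_of_le' hm
  have hbinom := add_pow_div_factorial y₂ y₃ (n + 1)
  rw [Nat.sum_antidiagonal_succ] at hbinom
  simp only [pow_zero, factorial_zero, cast_one, div_one, one_mul] at hbinom
  rw [symLHS_eq_sum_symTerm, sum_symTerm1_zero_zero_even hmr, sum_symTerm2_zero_even hm hmr,
    eq_sub_of_add_eq' hbinom.symm]
  field_simp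

end

theorem symSolEq_zero_zero_self_neg_self (r : ℕ) (t : ℝ) : symSolEq r 0 0 t (-t) t := by
  intro ℓ hℓ
  rw [mem_Icc] at hℓ
  obtain ⟨k, rfl | rfl⟩ := Nat.even_or_odd' ℓ
  · rw [symLHS_zero_zero_even (by omega) (by omega), neg_add_cancel, zero_pow (by omega)]
    ring
  · exact symLHS_zero_zero_odd r k

theorem not_symIneq_zero_zero_self_neg_self {r : ℕ} (hr : 1 ≤ r) {t : ℝ} (ht : t ≠ 0) :
    ¬ symIneq r 0 0 t (-t) t := by
  have hr₀ : (r : ℝ) ≠ 0 := Nat.cast_ne_zero.mpr (by omega)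
  have hpos : 0 < |t| ^ ((r : ℝ) / 2) := Real.rpow_pos_of_pos (abs_pos.mpr ht) _
  simp only [symIneq, mul_zero, sub_self, neg_add_cancel, abs_zero, abs_neg,
    Real.zero_rpow hr₀, Real.zero_rpow (div_ne_zero hr₀ two_ne_zero), not_le]
  linarith

/-- For every `r ≥ 1` and every nonzero `t`, the tuple `(0, 0, t, -t, t)` is a non-trivial
solution of the symmetric system of polynomial equations which violates the inequality. -/
theorem sym_equalities_insufficient (r : ℕ) (hr : 1 ≤ r) (t : ℝ) (ht : t ≠ 0) :
    nontrivSol 0 t (-t) ∧ symSolEq r 0 0 t (-t) t ∧ ¬ symIneq r 0 0 t (-t) t :=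
  ⟨Or.inr (Or.inl ht), symSolEq_zero_zero_self_neg_self r t,
    not_symIneq_zero_zero_self_neg_self hr ht⟩
end

section
/- The system consisting of the three polynomial equations (E₁): -2x₁x₂ + y₂/2 + x₁² + y₁/2 = 0, (E₂): x₂y₂ - x₁y₃/2 - 2x₁x₂² - x₁y₂/2 + x₁²x₂ + x₁y₁/2 = 0, (E₃): y₂y₃/4 + x₂²y₂ + y₂²/8 - x₁x₂y₃ - 4x₁x₂³/3 - x₁x₂y₂ + x₁²y₃/4 + x₁²x₂² + x₁²y₂/4 - x₁³x₂/3 + x₁⁴/12 + y₁²/8 + x₁²y₁/4 = 0, together with the inequality (I): |x₁|⁴ + |y₁|² + |y₂|² ≤ |2x₂-x₁|⁴ + |y₃-y₁|² + |y₂+y₃|², has no real solution (x₁,x₂,y₁,y₂,y₃) with at least one of x₁, y₁, y₂ nonzero. -/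
/-!
Eliminate `y₂` with (E₁) and write `u = 2 x₂ - x₁`. The combination `12 x₁ (E₃) - 6 (y₁ + x₁²) (E₂)`
then factors as `u · (3 (y₁ - x₁ u)² + x₁² u² + x₁⁴)`, whose second factor is positive for
`x₁ ≠ 0`; so `u = 0`, and (E₂) gives `y₃ = y₁`. For `x₁ = 0` the equations give `x₂ = 0` and
`y₃ = y₁` directly. In both cases `y₂ = -y₁` and the right-hand side of (I) vanishes, so (I)
forces `x₁ = y₁ = y₂ = 0`.
-/

structure SymEquations (x₁ x₂ y₁ y₂ y₃ : ℝ) : Prop where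
  e₁ : -2 * x₁ * x₂ + y₂ / 2 + x₁ ^ 2 + y₁ / 2 = 0
  e₂ : x₂ * y₂ - x₁ * y₃ / 2 - 2 * x₁ * x₂ ^ 2 - x₁ * y₂ / 2 + x₁ ^ 2 * x₂ + x₁ * y₁ / 2 = 0
  e₃ : y₂ * y₃ / 4 + x₂ ^ 2 * y₂ + y₂ ^ 2 / 8 - x₁ * x₂ * y₃ - 4 * x₁ * x₂ ^ 3 / 3
          - x₁ * x₂ * y₂ + x₁ ^ 2 * y₃ / 4 + x₁ ^ 2 * x₂ ^ 2 + x₁ ^ 2 * y₂ / 4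
          - x₁ ^ 3 * x₂ / 3 + x₁ ^ 4 / 12 + y₁ ^ 2 / 8 + x₁ ^ 2 * y₁ / 4 = 0

namespace SymEquations

variable {x₁ x₂ y₁ y₂ y₃ : ℝ}

theorem y₂_eq (h : SymEquations x₁ x₂ y₁ y₂ y₃) : y₂ = 2 * x₁ * (2 * x₂ - x₁) - y₁ := by
  linear_combination 2 * h.e₁

theorem sub_mul_form_eq_zero (h : SymEquations x₁ x₂ y₁ y₂ y₃) :
    (2 * x₂ - x₁) *
      (3 * (y₁ - x₁ * (2 * x₂ - x₁)) ^ 2 + x₁ ^ 2 * (2 * x₂ - x₁) ^ 2 + x₁ ^ 4) = 0 := by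
  have ⟨_, e₂, e₃⟩ := h
  rw [h.y₂_eq] at e₂ e₃
  linear_combination 12 * x₁ * e₃ - 6 * (y₁ + x₁ ^ 2) * e₂

theorem two_mul_x₂_eq_of_x₁_ne_zero (h : SymEquations x₁ x₂ y₁ y₂ y₃) (hx : x₁ ≠ 0) :
    2 * x₂ = x₁ := by
  have hform : 0 < 3 * (y₁ - x₁ * (2 * x₂ - x₁)) ^ 2 + x₁ ^ 2 * (2 * x₂ - x₁) ^ 2 + x₁ ^ 4 := by
    positivity
  have := (mul_eq_zero.mp h.sub_mul_form_eq_zero).resolve_right hform.ne'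
  linarith

theorem y₃_eq_of_x₁_ne_zero (h : SymEquations x₁ x₂ y₁ y₂ y₃) (hx : x₁ ≠ 0) : y₃ = y₁ := by
  have hu := h.two_mul_x₂_eq_of_x₁_ne_zero hx
  have e₂ := h.e₂
  rw [h.y₂_eq] at e₂
  refine mul_left_cancel₀ hx ?_
  linear_combination -2 * e₂ + (x₁ * (2 * x₂ - x₁) - y₁ - x₁ ^ 2) * hu

theorem x₂_eq_zero_and_y₃_eq_of_x₁_eq_zero (h : SymEquations x₁ x₂ y₁ y₂ y₃) (hx : x₁ = 0)
    (hy : y₁ ≠ 0) : x₂ = 0 ∧ y₃ = y₁ := by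
  have ⟨_, e₂, e₃⟩ := h
  rw [h.y₂_eq, hx] at e₂ e₃
  have hx₂ : x₂ = 0 := (mul_eq_zero.mp (by linear_combination -e₂ : x₂ * y₁ = 0)).resolve_right hy
  rw [hx₂] at e₃
  have := (mul_eq_zero.mp (by linear_combination -4 * e₃ : y₁ * (y₃ - y₁) = 0)).resolve_left hy
  exact ⟨hx₂, by linarith⟩

theorem two_mul_x₂_eq_and_y₃_eq (h : SymEquations x₁ x₂ y₁ y₂ y₃) (hnt : x₁ ≠ 0 ∨ y₁ ≠ 0) :
    2 * x₂ = x₁ ∧ y₃ = y₁ := by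
  by_cases hx : x₁ = 0
  · obtain ⟨hx₂, hy₃⟩ := h.x₂_eq_zero_and_y₃_eq_of_x₁_eq_zero hx (hnt.resolve_left (not_not.mpr hx))
    exact ⟨by rw [hx, hx₂]; ring, hy₃⟩
  · exact ⟨h.two_mul_x₂_eq_of_x₁_ne_zero hx, h.y₃_eq_of_x₁_ne_zero hx⟩

end SymEquations

/-- The symmetric system for `r = 4` — the equations `(E₁), (E₂), (E₃)` together with the
inequality `(I)` — has no real solution with at least one of `x₁, y₁, y₂` nonzero. -/
theorem sym_system_r4_no_nontrivial_solution :
    ¬ ∃ x₁ x₂ y₁ y₂ y₃ : ℝ,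
      (x₁ ≠ 0 ∨ y₁ ≠ 0 ∨ y₂ ≠ 0) ∧
      (-2 * x₁ * x₂ + y₂ / 2 + x₁ ^ 2 + y₁ / 2 = 0) ∧
      (x₂ * y₂ - x₁ * y₃ / 2 - 2 * x₁ * x₂ ^ 2 - x₁ * y₂ / 2 + x₁ ^ 2 * x₂ + x₁ * y₁ / 2 = 0) ∧
      (y₂ * y₃ / 4 + x₂ ^ 2 * y₂ + y₂ ^ 2 / 8 - x₁ * x₂ * y₃ - 4 * x₁ * x₂ ^ 3 / 3
          - x₁ * x₂ * y₂ + x₁ ^ 2 * y₃ / 4 + x₁ ^ 2 * x₂ ^ 2 + x₁ ^ 2 * y₂ / 4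
          - x₁ ^ 3 * x₂ / 3 + x₁ ^ 4 / 12 + y₁ ^ 2 / 8 + x₁ ^ 2 * y₁ / 4 = 0) ∧
      (|x₁| ^ 4 + |y₁| ^ 2 + |y₂| ^ 2 ≤
        |2 * x₂ - x₁| ^ 4 + |y₃ - y₁| ^ 2 + |y₂ + y₃| ^ 2) := by
  rintro ⟨x₁, x₂, y₁, y₂, y₃, hnt, e₁, e₂, e₃, hI⟩
  have h : SymEquations x₁ x₂ y₁ y₂ y₃ := ⟨e₁, e₂, e₃⟩
  have hy₂ := h.y₂_eq
  have hx₁y₁ : x₁ ≠ 0 ∨ y₁ ≠ 0 := by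
    by_contra! h0
    simp_all
  obtain ⟨hu, hy₃⟩ := h.two_mul_x₂_eq_and_y₃_eq hx₁y₁
  have hrhs : |2 * x₂ - x₁| ^ 4 + |y₃ - y₁| ^ 2 + |y₂ + y₃| ^ 2 = 0 := by
    rw [hy₂, hu, hy₃]
    simp
  have hlhs : 0 < |x₁| ^ 4 + |y₁| ^ 2 + |y₂| ^ 2 := by
    rcases hnt with hne | hne | hne <;> positivity
  linarith
end

section
/- Every real solution of the three polynomial equations (E₁), (E₂), (E₃) (the symmetric system equalities with r = 4) with x₁ ≠ 0 must satisfy x₁ = 2x₂ and y₁ = -y₂ = y₃. -/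
/-!
Eliminating `y₁` and `y₃` from `(E₃)` by means of `(E₁)` and `(E₂)` turns `12 x₁ (E₃)` into
`(2x₂ - x₁) (3 (y₂ - x₁ (2x₂ - x₁))² + x₁² (2x₂ - x₁)² + x₁⁴) = 0`, and the second factor is
positive when `x₁ ≠ 0`. Once `x₁ = 2x₂`, the equations `(E₁)` and `(E₂)` reduce to
`y₁ + y₂ = 0` and `x₁ (y₂ + y₃) = 0`.
-/

structure SymR4Equalities (x₁ x₂ y₁ y₂ y₃ : ℝ) : Prop where
  e₁ : -2 * x₁ * x₂ + y₂ / 2 + x₁ ^ 2 + y₁ / 2 = 0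
  e₂ : x₂ * y₂ - x₁ * y₃ / 2 - 2 * x₁ * x₂ ^ 2 - x₁ * y₂ / 2 + x₁ ^ 2 * x₂ + x₁ * y₁ / 2 = 0
  e₃ : y₂ * y₃ / 4 + x₂ ^ 2 * y₂ + y₂ ^ 2 / 8 - x₁ * x₂ * y₃ - 4 * x₁ * x₂ ^ 3 / 3
    - x₁ * x₂ * y₂ + x₁ ^ 2 * y₃ / 4 + x₁ ^ 2 * x₂ ^ 2 + x₁ ^ 2 * y₂ / 4
    - x₁ ^ 3 * x₂ / 3 + x₁ ^ 4 / 12 + y₁ ^ 2 / 8 + x₁ ^ 2 * y₁ / 4 = 0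

namespace SymR4Equalities

variable {x₁ x₂ y₁ y₂ y₃ : ℝ}

theorem factorization (h : SymR4Equalities x₁ x₂ y₁ y₂ y₃) :
    (2 * x₂ - x₁) *
      (3 * (y₂ - x₁ * (2 * x₂ - x₁)) ^ 2 + x₁ ^ 2 * (2 * x₂ - x₁) ^ 2 + x₁ ^ 4) = 0 := by
  linear_combination (12 * x₁) * h.e₃
    + (-3 * x₁ * y₂ - 3 * x₁ * y₁ + 12 * x₁ ^ 2 * x₂ - 6 * x₁ ^ 3) * h.e₁
    + (6 * y₂ - 24 * x₁ * x₂ + 6 * x₁ ^ 2) * h.e₂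

theorem eq_two_mul (h : SymR4Equalities x₁ x₂ y₁ y₂ y₃) (hx : x₁ ≠ 0) : x₁ = 2 * x₂ := by
  have hpos : 0 < 3 * (y₂ - x₁ * (2 * x₂ - x₁)) ^ 2 + x₁ ^ 2 * (2 * x₂ - x₁) ^ 2 + x₁ ^ 4 := by
    positivity
  have hzero := (mul_eq_zero.mp h.factorization).resolve_right hpos.ne'
  linarith

theorem y₁_eq_neg (h : SymR4Equalities x₁ x₂ y₁ y₂ y₃) (hx : x₁ = 2 * x₂) : y₁ = -y₂ := by
  linear_combination 2 * h.e₁ - 2 * x₁ * hx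

theorem neg_y₂_eq (h : SymR4Equalities x₁ x₂ y₁ y₂ y₃) (hx₀ : x₁ ≠ 0) (hx : x₁ = 2 * x₂) :
    -y₂ = y₃ := by
  have hprod : x₁ * (y₂ + y₃) = 0 := by
    linear_combination -2 * h.e₂ + 2 * x₁ * h.e₁ - (y₂ - 2 * x₁ * x₂ + 2 * x₁ ^ 2) * hx
  linarith [(mul_eq_zero.mp hprod).resolve_left hx₀]

end SymR4Equalities

/-- Every real solution of the equations `(E₁), (E₂), (E₃)` with `x₁ ≠ 0`
must satisfy `x₁ = 2x₂` and `y₁ = -y₂ = y₃`. -/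
theorem sym_r4_equalities_solution_form (x₁ x₂ y₁ y₂ y₃ : ℝ) (hx : x₁ ≠ 0)
    (hE1 : -2 * x₁ * x₂ + y₂ / 2 + x₁ ^ 2 + y₁ / 2 = 0)
    (hE2 : x₂ * y₂ - x₁ * y₃ / 2 - 2 * x₁ * x₂ ^ 2 - x₁ * y₂ / 2 + x₁ ^ 2 * x₂
        + x₁ * y₁ / 2 = 0)
    (hE3 : y₂ * y₃ / 4 + x₂ ^ 2 * y₂ + y₂ ^ 2 / 8 - x₁ * x₂ * y₃ - 4 * x₁ * x₂ ^ 3 / 3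
        - x₁ * x₂ * y₂ + x₁ ^ 2 * y₃ / 4 + x₁ ^ 2 * x₂ ^ 2 + x₁ ^ 2 * y₂ / 4
        - x₁ ^ 3 * x₂ / 3 + x₁ ^ 4 / 12 + y₁ ^ 2 / 8 + x₁ ^ 2 * y₁ / 4 = 0) :
    x₁ = 2 * x₂ ∧ y₁ = -y₂ ∧ -y₂ = y₃ := by
  have h : SymR4Equalities x₁ x₂ y₁ y₂ y₃ := ⟨hE1, hE2, hE3⟩
  have hx₁ := h.eq_two_mul hx
  exact ⟨hx₁, h.y₁_eq_neg hx₁, h.neg_y₂_eq hx hx₁⟩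
end

section
/- If x₁ = 0, then any real solution of (E₁), (E₂), (E₃) with at least one of y₁, y₂ nonzero must have the form (0, 0, y₁, -y₁, y₁) for some y₁ ∈ ℝ. -/
/-- If `x₁ = 0`, any real solution of `(E₁), (E₂), (E₃)` with `y₁ ≠ 0` or `y₂ ≠ 0`
must have the form `(0, 0, y₁, -y₁, y₁)`. -/
theorem sym_r4_equalities_x1_zero (x₁ x₂ y₁ y₂ y₃ : ℝ) (hx : x₁ = 0)
    (hnt : y₁ ≠ 0 ∨ y₂ ≠ 0)
    (hE1 : -2 * x₁ * x₂ + y₂ / 2 + x₁ ^ 2 + y₁ / 2 = 0)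
    (hE2 : x₂ * y₂ - x₁ * y₃ / 2 - 2 * x₁ * x₂ ^ 2 - x₁ * y₂ / 2 + x₁ ^ 2 * x₂
        + x₁ * y₁ / 2 = 0)
    (hE3 : y₂ * y₃ / 4 + x₂ ^ 2 * y₂ + y₂ ^ 2 / 8 - x₁ * x₂ * y₃ - 4 * x₁ * x₂ ^ 3 / 3
        - x₁ * x₂ * y₂ + x₁ ^ 2 * y₃ / 4 + x₁ ^ 2 * x₂ ^ 2 + x₁ ^ 2 * y₂ / 4
        - x₁ ^ 3 * x₂ / 3 + x₁ ^ 4 / 12 + y₁ ^ 2 / 8 + x₁ ^ 2 * y₁ / 4 = 0) :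
    x₂ = 0 ∧ y₂ = -y₁ ∧ y₃ = y₁ := by
  subst hx
  obtain rfl : y₂ = -y₁ := by linear_combination 2 * hE1
  have hy₁ : y₁ ≠ 0 := by simpa using hnt
  obtain rfl : x₂ = 0 := by
    have h : x₂ * y₁ = 0 := by linear_combination -hE2
    exact (mul_eq_zero.1 h).resolve_right hy₁
  have h : y₁ * (y₁ - y₃) = 0 := by linear_combination 4 * hE3
  exact ⟨rfl, rfl, (sub_eq_zero.1 ((mul_eq_zero.1 h).resolve_left hy₁)).symm⟩
end

section
/- For any x₁ ∈ ℝ and y₁ ∈ ℝ, setting x₂ = x₁, y₃ = 0, and y₂ = 2x₁² - y₁ gives a solution of the equations (E₁) and (E₂) (the symmetric system equalities with r = 3) that also satisfies the inequality |x₁|³ + |y₁|^{3/2} + |y₂|^{3/2} ≤ |2x₂-x₁|³ + |y₃-y₁|^{3/2} + |y₂+y₃|^{3/2}. Consequently the symmetric order satisfies r̄_sym ≥ 4. -/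
open Finset

/-!
The substitution `x₂ = x₁`, `y₃ = 0`, `y₂ = 2x₁² - y₁` turns the inequality into an equality
term by term and kills the equations of degrees `1, 2, 3`, so the systems of orders `1, 2, 3` have
non-trivial solutions. For order `4`, put `b = 2x₂ - x₁`, `p = y₁ - x₁b`, `q = y₂ + y₃ - x₁b`.
Modulo the degree-2 equation, the equations of degrees `3, 4` and the inequality become
`x₁q + bp = 0`, `3(pq + x₁b(p+q) + pb² + qx₁²) = x₁b(x₁² + b²)` and `x₁⁴ + 2p² ≤ b⁴ + 2q²`.
The two equations give `b(3p² + x₁²(x₁² + b²)) = 0`, and for `b = 0` the inequality forces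
`x₁ = p = 0`; hence the only solution is the trivial one and the order-4 system is infeasible.
-/

section Evaluation

variable (x₁ x₂ y₁ y₂ y₃ : ℝ)

theorem symLHS_of_le {r ℓ : ℕ} (h : ℓ ≤ r) :
    symLHS r ℓ x₁ x₂ y₁ y₂ y₃ = symLHS ℓ ℓ x₁ x₂ y₁ y₂ y₃ := by
  have h₁ : symIdx1 r ℓ = symIdx1 ℓ ℓ := by
    ext q
    simp only [symIdx1, mem_filter, mem_product, mem_range]
    omega
  have h₂ : symIdx2 r ℓ = symIdx2 ℓ ℓ := by
    ext p
    simp only [symIdx2, mem_filter, mem_product, mem_range]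
    omega
  rw [symLHS, symLHS, h₁, h₂]

theorem symLHS_one_one : symLHS 1 1 x₁ x₂ y₁ y₂ y₃ = 0 := by
  rw [symLHS, show symIdx1 1 1 = {(1, 0, 0, 0)} by decide, show symIdx2 1 1 = {(1, 0)} by decide]
  norm_num

theorem symLHS_two_two :
    symLHS 2 2 x₁ x₂ y₁ y₂ y₃ = -2 * x₁ * x₂ + y₂ / 2 + x₁ ^ 2 + y₁ / 2 := by
  rw [symLHS, show symIdx1 2 2 = {(0, 1, 0, 0), (1, 0, 1, 0), (2, 0, 0, 0)} by decide,
    show symIdx2 2 2 = {(0, 1), (2, 0)} by decide]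
  norm_num [Nat.factorial]
  ring

theorem symLHS_three_three :
    symLHS 3 3 x₁ x₂ y₁ y₂ y₃ = x₂ * y₂ - x₁ * y₃ / 2 - 2 * x₁ * x₂ ^ 2 - x₁ * y₂ / 2
      + x₁ ^ 2 * x₂ + x₁ * y₁ / 2 := by
  rw [symLHS, show symIdx1 3 3 = {(0, 1, 1, 0), (1, 0, 0, 1), (1, 0, 2, 0), (1, 1, 0, 0),
      (2, 0, 1, 0), (3, 0, 0, 0)} by decide,
    show symIdx2 3 3 = {(1, 1), (3, 0)} by decide]
  norm_num [Nat.factorial]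
  ring

theorem symLHS_four_four :
    symLHS 4 4 x₁ x₂ y₁ y₂ y₃ = y₂ * y₃ / 4 + y₂ ^ 2 / 8 + y₁ ^ 2 / 8 + x₂ ^ 2 * y₂
      - x₁ * x₂ * y₃ - x₁ * x₂ * y₂ - 4 * x₁ * x₂ ^ 3 / 3 + x₁ ^ 2 * y₃ / 4 + x₁ ^ 2 * y₂ / 4
      + x₁ ^ 2 * y₁ / 4 + x₁ ^ 2 * x₂ ^ 2 - x₁ ^ 3 * x₂ / 3 + x₁ ^ 4 / 12 := by
  rw [symLHS, show symIdx1 4 4 = {(0, 1, 0, 1), (0, 1, 2, 0), (0, 2, 0, 0), (1, 0, 1, 1),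
      (1, 0, 3, 0), (1, 1, 1, 0), (2, 0, 0, 1), (2, 0, 2, 0), (2, 1, 0, 0), (3, 0, 1, 0),
      (4, 0, 0, 0)} by decide,
    show symIdx2 4 4 = {(0, 2), (2, 1), (4, 0)} by decide]
  norm_num [Nat.factorial]
  ring

theorem symIneq_four_iff :
    symIneq 4 x₁ x₂ y₁ y₂ y₃ ↔
      x₁ ^ 4 + y₁ ^ 2 + y₂ ^ 2 ≤ (2 * x₂ - x₁) ^ 4 + (y₃ - y₁) ^ 2 + (y₂ + y₃) ^ 2 := by
  have h4 : ((4 : ℕ) : ℝ) / 2 = (2 : ℕ) := by norm_num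
  simp only [symIneq, h4, Real.rpow_natCast, Even.pow_abs (by decide : Even 4),
    Even.pow_abs (by decide : Even 2)]

end Evaluation

section Family

variable (x₁ y₁ : ℝ)

theorem symSolEq_family {r : ℕ} (hr : r ≤ 3) : symSolEq r x₁ x₁ y₁ (2 * x₁ ^ 2 - y₁) 0 := by
  intro ℓ hℓ
  obtain ⟨hℓ₁, hℓr⟩ := mem_Icc.1 hℓ
  have hℓ₃ : ℓ ≤ 3 := hℓr.trans hr
  rw [symLHS_of_le _ _ _ _ _ hℓr]
  interval_cases ℓ
  · exact symLHS_one_one ..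
  · rw [symLHS_two_two]; ring
  · rw [symLHS_three_three]; ring

theorem symIneq_family (r : ℕ) : symIneq r x₁ x₁ y₁ (2 * x₁ ^ 2 - y₁) 0 := by
  rw [symIneq, show 2 * x₁ - x₁ = x₁ by ring, zero_sub, abs_neg, add_zero]

end Family

theorem zero_of_pow_four_add_le {a p : ℝ} (h : a ^ 4 + 2 * p ^ 2 ≤ 0) : a = 0 ∧ p = 0 :=
  ⟨pow_eq_zero_iff four_ne_zero |>.1 (by nlinarith [sq_nonneg p, pow_two_nonneg (a ^ 2)]),
    pow_eq_zero_iff two_ne_zero |>.1 (by nlinarith [sq_nonneg p, pow_two_nonneg (a ^ 2)])⟩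

theorem eq_zero_of_reduced_order_four {a b p q : ℝ} (h₁ : a * q + b * p = 0)
    (h₂ : 3 * (p * q + a * b * (p + q) + p * b ^ 2 + q * a ^ 2) - a * b * (a ^ 2 + b ^ 2) = 0)
    (hle : a ^ 4 + 2 * p ^ 2 ≤ b ^ 4 + 2 * q ^ 2) : a = 0 ∧ p = 0 := by
  have key : b * (3 * p ^ 2 + a ^ 2 * (a ^ 2 + b ^ 2)) = 0 := by
    linear_combination (-a) * h₂ + 3 * (p + a * b + a ^ 2) * h₁
  rcases mul_eq_zero.1 key with rfl | hsum
  · rcases eq_or_ne q 0 with rfl | hq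
    · exact zero_of_pow_four_add_le (by linarith)
    · have ha : a = 0 := (mul_eq_zero.1 (by linarith : a * q = 0)).resolve_right hq
      subst ha
      exact ⟨rfl, (mul_eq_zero.1 (by linarith : q * p = 0)).resolve_left hq⟩
  · exact zero_of_pow_four_add_le (by nlinarith [sq_nonneg p, sq_nonneg (a * b)])

theorem not_exists_nontrivial_order_four : ¬ ∃ x₁ x₂ y₁ y₂ y₃ : ℝ,
    nontrivSol x₁ y₁ y₂ ∧ symSolEq 4 x₁ x₂ y₁ y₂ y₃ ∧ symIneq 4 x₁ x₂ y₁ y₂ y₃ := by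
  rintro ⟨x₁, x₂, y₁, y₂, y₃, hnt, heq, hle⟩
  have hE₂ := heq 2 (by decide)
  have hE₃ := heq 3 (by decide)
  have hE₄ := heq 4 (by decide)
  rw [symLHS_of_le _ _ _ _ _ (by decide), symLHS_two_two] at hE₂
  rw [symLHS_of_le _ _ _ _ _ (by decide), symLHS_three_three] at hE₃
  rw [symLHS_four_four] at hE₄
  rw [symIneq_four_iff] at hle
  obtain ⟨hx₁, hp⟩ := eq_zero_of_reduced_order_four (a := x₁) (b := 2 * x₂ - x₁)
    (p := y₁ - x₁ * (2 * x₂ - x₁)) (q := y₂ + y₃ - x₁ * (2 * x₂ - x₁))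
    (by linear_combination 4 * x₂ * hE₂ - 2 * hE₃)
    (by linear_combination (-12) * hE₄ + (6 * y₃ + 3 * y₂ + 3 * y₁ + 24 * x₂ ^ 2
      - 12 * x₁ * x₂ + 6 * x₁ ^ 2) * hE₂)
    (by linear_combination hle - 4 * (y₃ + y₂ - y₁) * hE₂)
  subst hx₁
  have hy₁ : y₁ = 0 := by linarith
  subst hy₁
  have hy₂ : y₂ = 0 := by linarith
  simp [nontrivSol, hy₂] at hnt

/-- Setting `x₂ = x₁`, `y₃ = 0`, `y₂ = 2x₁² - y₁` solves `(E₁)` and `(E₂)` (the symmetric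
system equalities for `r = 3`) and satisfies the order-3 inequality; consequently the
symmetric order satisfies `r̄_sym ≥ 4`. -/
theorem sym_order_ge_four :
    (∀ x₁ y₁ : ℝ,
      let x₂ : ℝ := x₁
      let y₃ : ℝ := 0
      let y₂ : ℝ := 2 * x₁ ^ 2 - y₁
      (-2 * x₁ * x₂ + y₂ / 2 + x₁ ^ 2 + y₁ / 2 = 0) ∧
      (x₂ * y₂ - x₁ * y₃ / 2 - 2 * x₁ * x₂ ^ 2 - x₁ * y₂ / 2 + x₁ ^ 2 * x₂
          + x₁ * y₁ / 2 = 0) ∧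
      (|x₁| ^ (3 : ℝ) + |y₁| ^ ((3 : ℝ) / 2) + |y₂| ^ ((3 : ℝ) / 2) ≤
        |2 * x₂ - x₁| ^ (3 : ℝ) + |y₃ - y₁| ^ ((3 : ℝ) / 2) + |y₂ + y₃| ^ ((3 : ℝ) / 2))) ∧
    4 ≤ symOrder := by
  refine ⟨fun x₁ y₁ => ⟨by ring, by ring,
    by simpa only [symIneq, Nat.cast_ofNat] using symIneq_family x₁ y₁ 3⟩, ?_⟩
  -- `sInf ∅ = 0` in `ℕ`, so the bound needs an infeasible order, not only feasible ones below 4.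
  refine le_csInf ⟨4, by norm_num, not_exists_nontrivial_order_four⟩ ?_
  rintro r ⟨hr₁, hr⟩
  by_contra! hr₄
  exact hr ⟨1, 1, 0, 2 * 1 ^ 2 - 0, 0, Or.inl one_ne_zero,
    symSolEq_family 1 0 (by omega), symIneq_family 1 0 r⟩
end
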